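/- Let n ≥ 2, let Ω ⊆ ℝⁿ be a bounded open set with C² boundary, and let (u^{m_k})₁^∞ ⊆ C²(Ω) ∩ C⁰(cl Ω) be harmonic functions with boundary values g^{m_k} satisfying a uniform Lipschitz-and-sup bound Lip(g^{m_k},∂Ω) + max_{∂Ω}|g^{m_k}| ≤ C. Suppose g^{m_k} → g uniformly on ∂Ω, u^{m_k} → u locally uniformly in Ω with u ∈ C²(Ω) harmonic, and the sequence (u^{m_k}) is uniformly bounded in W^{1,p}(Ω) for some p > n. Then u^{m_k} → u uniformly on cl Ω, u extends to C⁰(cl Ω) with u = g on ∂Ω, and hence u solves the Dirichlet problem Δu = 0 in Ω, u = g on ∂Ω. -/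

import Mathlib

/-!
The differences `u m - u l` are harmonic in `Ω` and continuous on `cl Ω`, so by the weak maximum
principle `sup_{cl Ω} |u m - u l| ≤ sup_{∂Ω} |g m - g l|`: uniform Cauchyness of the boundary data
propagates to `cl Ω`. The uniform limit then agrees with `ulim` in `Ω` and with `glim` on `∂Ω`.

The maximum principle is proved by perturbation: `f + ε ‖x‖²` has positive Laplacian, so it cannot
have an interior maximum, where each second directional derivative is `≤ 0`.
-/

open MeasureTheory Metric Set Filter
open scoped ENNReal NNReal Topology

noncomputable section

/-- A bounded open set has `C²` boundary: near each boundary point, the set and its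
boundary are the sublevel/level set of a `C²` defining function with nonvanishing gradient. -/
def HasC2Boundary {n : ℕ} (Ω : Set (EuclideanSpace ℝ (Fin n))) : Prop :=
  ∀ x ∈ frontier Ω, ∃ (U : Set (EuclideanSpace ℝ (Fin n))) (φ : EuclideanSpace ℝ (Fin n) → ℝ),
    IsOpen U ∧ x ∈ U ∧ ContDiff ℝ 2 φ ∧ (∀ y ∈ U, fderiv ℝ φ y ≠ 0) ∧
    (Ω ∩ U = {y ∈ U | φ y < 0}) ∧ (frontier Ω ∩ U = {y ∈ U | φ y = 0})

/-- The Laplacian `Δu(x) = ∑ᵢ ∂²u/∂xᵢ²(x)`. -/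
def laplacian {n : ℕ} (u : EuclideanSpace ℝ (Fin n) → ℝ) (x : EuclideanSpace ℝ (Fin n)) : ℝ :=
  ∑ i : Fin n, iteratedFDeriv ℝ 2 u x ![EuclideanSpace.single i 1, EuclideanSpace.single i 1]

theorem IsLocalMax.deriv_deriv_nonpos {f : ℝ → ℝ} {a : ℝ} (h : IsLocalMax f a)
    (hc : ContinuousAt f a) : deriv (deriv f) a ≤ 0 := by
  by_contra! hpos
  have hmin : IsLocalMin f a := isLocalMin_of_deriv_deriv_pos hpos h.deriv_eq_zero hc
  have hconst : f =ᶠ[𝓝 a] fun _ => f a := (hmin.and h).mono fun y hy => le_antisymm hy.2 hy.1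
  have : deriv (deriv f) a = 0 := by simp [hconst.deriv.deriv_eq]
  linarith

theorem ContDiffAt.deriv_deriv_comp_add_smul {E F : Type*} [NormedAddCommGroup E]
    [NormedSpace ℝ E] [NormedAddCommGroup F] [NormedSpace ℝ F] {f : E → F} {x : E}
    (hf : ContDiffAt ℝ 2 f x) (v : E) :
    deriv (deriv fun t : ℝ => f (x + t • v)) 0 = iteratedFDeriv ℝ 2 f x ![v, v] := by
  have hline : ∀ t : ℝ, HasDerivAt (fun t : ℝ => x + t • v) v t := fun t => by
    simpa using ((hasDerivAt_id t).smul_const v).const_add x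
  have hline0 : Tendsto (fun t : ℝ => x + t • v) (𝓝 0) (𝓝 x) := by
    simpa using (hline 0).continuousAt.tendsto
  have hnear : ∀ᶠ t in 𝓝 (0 : ℝ), DifferentiableAt ℝ f (x + t • v) :=
    hline0.eventually ((hf.eventually (by simp)).mono fun y hy => hy.differentiableAt two_ne_zero)
  have hderiv : deriv (fun t : ℝ => f (x + t • v)) =ᶠ[𝓝 0] fun t => fderiv ℝ f (x + t • v) v :=
    hnear.mono fun t ht => (ht.hasFDerivAt.comp_hasDerivAt t (hline t)).deriv
  have hdf :
      HasFDerivAt (fderiv ℝ f) (fderiv ℝ (fderiv ℝ f) x) ((fun t : ℝ => x + t • v) 0) := by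
    simpa using ((hf.fderiv_right (m := 1) one_add_one_eq_two.le).differentiableAt
      one_ne_zero).hasFDerivAt
  have hderiv2 :
      HasDerivAt (fun t : ℝ => fderiv ℝ f (x + t • v) v) (fderiv ℝ (fderiv ℝ f) x v v) 0 := by
    have hdf_line :
        HasDerivAt (fun t : ℝ => fderiv ℝ f (x + t • v)) (fderiv ℝ (fderiv ℝ f) x v) 0 :=
      hdf.comp_hasDerivAt 0 (hline 0)
    simpa using hdf_line.clm_apply (hasDerivAt_const 0 v)
  rw [hderiv.deriv_eq, hderiv2.deriv, iteratedFDeriv_two_apply]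
  simp

open scoped Laplacian

section Laplacian

variable {E : Type*} [NormedAddCommGroup E] [InnerProductSpace ℝ E] [FiniteDimensional ℝ E]

theorem IsLocalMax.laplacian_nonpos {f : E → ℝ} {x : E} (h : IsLocalMax f x)
    (hf : ContDiffAt ℝ 2 f x) : Δ f x ≤ 0 := by
  rw [InnerProductSpace.laplacian_eq_iteratedFDeriv_stdOrthonormalBasis]
  refine Finset.sum_nonpos fun i _ => ?_
  set v := stdOrthonormalBasis ℝ E i
  have hline : ContinuousAt (fun t : ℝ => x + t • v) 0 := by fun_prop
  have hmax : IsLocalMax f ((fun t : ℝ => x + t • v) 0) := by simpa using h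
  rw [← hf.deriv_deriv_comp_add_smul v]
  exact IsLocalMax.deriv_deriv_nonpos (hmax.comp_tendsto (g := fun t : ℝ => x + t • v) hline)
    (hf.continuousAt.comp_of_eq hline (by simp))

theorem laplacian_norm_sq (x : E) : Δ (fun y : E => ‖y‖ ^ 2) x = 2 * Module.finrank ℝ E := by
  have hq : fderiv ℝ (fun y : E => ‖y‖ ^ 2) = (2 • innerSL ℝ : E →L[ℝ] E →L[ℝ] ℝ) := by
    ext1 y; simp
  have hsecond : ∀ v : E, iteratedFDeriv ℝ 2 (fun y : E => ‖y‖ ^ 2) x ![v, v] = 2 * ‖v‖ ^ 2 := by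
    intro v
    rw [iteratedFDeriv_two_apply, hq, ContinuousLinearMap.fderiv]
    simp only [Matrix.cons_val_zero, Matrix.cons_val_one, Matrix.cons_val_fin_one,
      smul_apply, nsmul_eq_mul, Nat.cast_ofNat]
    exact congrArg (2 * ·) (real_inner_self_eq_norm_sq v)
  simp [InnerProductSpace.laplacian_eq_iteratedFDeriv_stdOrthonormalBasis, hsecond, mul_comm]

open InnerProductSpace

variable {U : Set E}

theorem exists_mem_frontier_le_of_laplacian_pos (hU : IsOpen U) (hb : Bornology.IsBounded U)
    {f : E → ℝ} (hf : ContDiffOn ℝ 2 f U) (hfc : ContinuousOn f (closure U))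
    (hΔ : ∀ x ∈ U, 0 < Δ f x) {x : E} (hx : x ∈ closure U) : ∃ y ∈ frontier U, f x ≤ f y := by
  obtain ⟨y, hy, hmax⟩ := hb.isCompact_closure.exists_isMaxOn ⟨x, hx⟩ hfc
  refine ⟨y, ?_, hmax hx⟩
  rw [closure_eq_self_union_frontier] at hy
  refine hy.resolve_left fun hyU => ?_
  have hloc : IsLocalMax f y := hmax.isLocalMax (mem_of_superset (hU.mem_nhds hyU) subset_closure)
  exact (hΔ y hyU).not_ge (hloc.laplacian_nonpos (hf.contDiffAt (hU.mem_nhds hyU)))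

theorem le_of_forall_mem_frontier_le_of_laplacian_nonneg [Nontrivial E] (hU : IsOpen U)
    (hb : Bornology.IsBounded U) {f : E → ℝ} (hf : ContDiffOn ℝ 2 f U)
    (hfc : ContinuousOn f (closure U)) (hΔ : ∀ x ∈ U, 0 ≤ Δ f x) {M : ℝ}
    (hM : ∀ y ∈ frontier U, f y ≤ M) {x : E} (hx : x ∈ closure U) : f x ≤ M := by
  obtain ⟨R, hR, hRU⟩ := hb.closure.exists_pos_norm_le
  refine le_of_forall_pos_le_add fun δ hδ => ?_
  set ε := δ / R ^ 2
  have hq : ContDiff ℝ 2 (fun y : E => ‖y‖ ^ 2) := contDiff_norm_sq ℝ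
  have hΔε : ∀ y ∈ U, 0 < Δ (f + ε • fun y : E => ‖y‖ ^ 2) y := fun y hy => by
    have hfy := hf.contDiffAt (hU.mem_nhds hy)
    have hεq : ContDiffAt ℝ 2 (ε • fun y : E => ‖y‖ ^ 2) y := hq.contDiffAt.const_smul ε
    rw [hfy.laplacian_add hεq, laplacian_smul ε hq.contDiffAt, laplacian_norm_sq, smul_eq_mul]
    have hdim : 0 < Module.finrank ℝ E := Module.finrank_pos
    have hΔy := hΔ y hy
    positivity
  obtain ⟨y, hy, hxy⟩ := exists_mem_frontier_le_of_laplacian_pos hU hb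
    (hf.add (hq.contDiffOn.const_smul ε)) (hfc.add (hq.continuous.continuousOn.const_smul ε))
    hΔε hx
  have hyR : ε * ‖y‖ ^ 2 ≤ δ :=
    calc ε * ‖y‖ ^ 2 ≤ ε * R ^ 2 := by gcongr; exact hRU y (frontier_subset_closure hy)
      _ = δ := div_mul_cancel₀ δ (by positivity)
  have hεx : 0 ≤ ε * ‖x‖ ^ 2 := by positivity
  simp only [smul_eq_mul] at hxy
  linarith [hM y hy]

theorem IsOpen.harmonicOnNhd (hU : IsOpen U) {f : E → ℝ} (hf : ContDiffOn ℝ 2 f U)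
    (hΔ : ∀ x ∈ U, Δ f x = 0) : HarmonicOnNhd f U := fun _ hx =>
  ⟨hf.contDiffAt (hU.mem_nhds hx), eventually_of_mem (hU.mem_nhds hx) hΔ⟩

theorem HarmonicOnNhd.abs_le_of_forall_mem_frontier_abs_le [Nontrivial E] {f : E → ℝ}
    (hf : HarmonicOnNhd f U) (hU : IsOpen U) (hb : Bornology.IsBounded U)
    (hfc : ContinuousOn f (closure U)) {M : ℝ} (hM : ∀ y ∈ frontier U, |f y| ≤ M) {x : E}
    (hx : x ∈ closure U) : |f x| ≤ M := by
  have hΔ : ∀ {g : E → ℝ}, HarmonicOnNhd g U → ∀ y ∈ U, 0 ≤ Δ g y := fun hg y hy =>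
    (hg y hy).2.eq_of_nhds.ge
  refine abs_le.2 ⟨neg_le.1 ?_, ?_⟩
  · exact le_of_forall_mem_frontier_le_of_laplacian_nonneg hU hb hf.neg.contDiffOn hfc.neg
      (hΔ hf.neg) (fun y hy => neg_le.2 (neg_le_of_abs_le (hM y hy))) hx
  · exact le_of_forall_mem_frontier_le_of_laplacian_nonneg hU hb hf.contDiffOn hfc
      (hΔ hf) (fun y hy => le_of_abs_le (hM y hy)) hx

theorem uniformCauchySeqOn_closure_of_frontier [Nontrivial E] {ι : Type*} {l : Filter ι}
    {F : ι → E → ℝ} (hU : IsOpen U) (hb : Bornology.IsBounded U)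
    (hF : ∀ k, HarmonicOnNhd (F k) U) (hFc : ∀ k, ContinuousOn (F k) (closure U))
    (h : UniformCauchySeqOn F l (frontier U)) : UniformCauchySeqOn F l (closure U) := by
  intro s hs
  obtain ⟨ε, hε, hεs⟩ := Metric.mem_uniformity_dist.1 hs
  filter_upwards [h _ (Metric.dist_mem_uniformity (half_pos hε))] with m hm x hx
  refine hεs ?_
  have := HarmonicOnNhd.abs_le_of_forall_mem_frontier_abs_le ((hF m.1).sub (hF m.2)) hU hb
    ((hFc m.1).sub (hFc m.2)) (fun y hy => (hm y hy).le) hx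
  rw [Real.dist_eq]
  exact this.trans_lt (half_lt_self hε)

end Laplacian

theorem laplacian_eq_laplacian_innerProductSpace {n : ℕ} (u : EuclideanSpace ℝ (Fin n) → ℝ) :
    laplacian u = Δ u := by
  rw [InnerProductSpace.laplacian_eq_iteratedFDeriv_orthonormalBasis u
    (EuclideanSpace.basisFun (Fin n) ℝ)]
  ext x
  simp [laplacian]

theorem laplacian_congr_of_eqOn {n : ℕ} {U : Set (EuclideanSpace ℝ (Fin n))} (hU : IsOpen U)
    {f g : EuclideanSpace ℝ (Fin n) → ℝ} (h : EqOn f g U) {x : EuclideanSpace ℝ (Fin n)}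
    (hx : x ∈ U) : laplacian f x = laplacian g x := by
  simp only [laplacian_eq_laplacian_innerProductSpace]
  exact (InnerProductSpace.laplacian_congr_nhds (eventuallyEq_of_mem (hU.mem_nhds hx) h)).eq_of_nhds

theorem uniform_convergence_dirichlet_limit_general {n : ℕ} (hn : 2 ≤ n)
    (Ω : Set (EuclideanSpace ℝ (Fin n))) (hΩopen : IsOpen Ω)
    (hΩbdd : Bornology.IsBounded Ω)
    (g : ℕ → EuclideanSpace ℝ (Fin n) → ℝ)
    (u : ℕ → EuclideanSpace ℝ (Fin n) → ℝ)
    (glim : EuclideanSpace ℝ (Fin n) → ℝ)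
    (ulim : EuclideanSpace ℝ (Fin n) → ℝ)
    (huC2 : ∀ k, ContDiffOn ℝ 2 (u k) Ω)
    (huC0 : ∀ k, ContinuousOn (u k) (closure Ω))
    (huharm : ∀ k, ∀ x ∈ Ω, laplacian (u k) x = 0)
    (hubdry : ∀ k, ∀ x ∈ frontier Ω, u k x = g k x)
    (hgconv : TendstoUniformlyOn g glim Filter.atTop (frontier Ω))
    (hulocunif : ∀ K : Set (EuclideanSpace ℝ (Fin n)), IsCompact K → K ⊆ Ω →
      TendstoUniformlyOn u ulim Filter.atTop K)
    (hulimharm : ∀ x ∈ Ω, laplacian ulim x = 0) :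
    ∃ v : EuclideanSpace ℝ (Fin n) → ℝ,
      (∀ x ∈ Ω, v x = ulim x) ∧
      ContinuousOn v (closure Ω) ∧
      (∀ x ∈ frontier Ω, v x = glim x) ∧
      TendstoUniformlyOn u v Filter.atTop (closure Ω) ∧
      (∀ x ∈ Ω, laplacian v x = 0) := by
  classical
  have : Nonempty (Fin n) := ⟨⟨0, by omega⟩⟩
  have hu_frontier : TendstoUniformlyOn u glim atTop (frontier Ω) :=
    hgconv.congr (Eventually.of_forall fun k x hx => (hubdry k x hx).symm)
  have hcauchy : UniformCauchySeqOn u atTop (closure Ω) :=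
    uniformCauchySeqOn_closure_of_frontier hΩopen hΩbdd
      (fun k => hΩopen.harmonicOnNhd (huC2 k) fun x hx =>
        laplacian_eq_laplacian_innerProductSpace (u k) ▸ huharm k x hx)
      huC0 hu_frontier.uniformCauchySeqOn
  set v := Ω.piecewise ulim glim
  have hvΩ : EqOn v ulim Ω := fun x hx => piecewise_eq_of_mem _ _ _ hx
  have hv_frontier : EqOn v glim (frontier Ω) := fun x hx =>
    piecewise_eq_of_notMem _ _ _ (disjoint_left.1 (disjoint_frontier_iff_isOpen.2 hΩopen) hx)
  have hpointwise : ∀ x ∈ closure Ω, Tendsto (fun k => u k x) atTop (𝓝 (v x)) := by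
    intro x hx
    rcases closure_eq_self_union_frontier Ω ▸ hx with hx | hx
    · rw [hvΩ hx]
      exact (hulocunif {x} isCompact_singleton (singleton_subset_iff.2 hx)).tendsto_at rfl
    · rw [hv_frontier hx]
      exact hu_frontier.tendsto_at hx
  have hconv : TendstoUniformlyOn u v atTop (closure Ω) :=
    hcauchy.tendstoUniformlyOn_of_tendsto hpointwise
  exact ⟨v, hvΩ, hconv.continuousOn (Frequently.of_forall huC0), hv_frontier, hconv,
    fun x hx => (laplacian_congr_of_eqOn hΩopen hvΩ hx).trans (hulimharm x hx)⟩

/-- Let `(u^{m_k}) ⊆ C²(Ω) ∩ C⁰(cl Ω)` be harmonic with boundary values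
`g^{m_k}` satisfying a uniform Lipschitz-and-sup bound. If `g^{m_k} → g` uniformly on `∂Ω`,
`u^{m_k} → u` locally uniformly in `Ω` with `u ∈ C²(Ω)` harmonic, and the sequence is
uniformly bounded in `W^{1,p}(Ω)` for some `p > n`, then `u^{m_k} → u` uniformly on `cl Ω`,
`u` extends continuously to `cl Ω` with `u = g` on `∂Ω`, and this extension solves the
Dirichlet problem `Δu = 0` in `Ω`, `u = g` on `∂Ω`. -/
theorem uniform_convergence_dirichlet_limit {n : ℕ} (hn : 2 ≤ n)
    (Ω : Set (EuclideanSpace ℝ (Fin n))) (hΩopen : IsOpen Ω)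
    (hΩbdd : Bornology.IsBounded Ω) (hΩC2 : HasC2Boundary Ω)
    (C : ℝ) (hC : 0 < C)
    (g : ℕ → EuclideanSpace ℝ (Fin n) → ℝ)
    (u : ℕ → EuclideanSpace ℝ (Fin n) → ℝ)
    (glim : EuclideanSpace ℝ (Fin n) → ℝ)
    (ulim : EuclideanSpace ℝ (Fin n) → ℝ)
    (p : ℝ) (hpn : (n : ℝ) < p)
    (hgcont : ∀ k, ContinuousOn (g k) (frontier Ω))
    (hgbound : ∀ k, ∃ L M : ℝ, 0 ≤ L ∧ 0 ≤ M ∧ L + M ≤ C ∧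
      (∀ x ∈ frontier Ω, ∀ y ∈ frontier Ω, |g k x - g k y| ≤ L * ‖x - y‖) ∧
      (∀ x ∈ frontier Ω, |g k x| ≤ M))
    (huC2 : ∀ k, ContDiffOn ℝ 2 (u k) Ω)
    (huC0 : ∀ k, ContinuousOn (u k) (closure Ω))
    (huharm : ∀ k, ∀ x ∈ Ω, laplacian (u k) x = 0)
    (hubdry : ∀ k, ∀ x ∈ frontier Ω, u k x = g k x)
    (hgconv : TendstoUniformlyOn g glim Filter.atTop (frontier Ω))
    (hulocunif : ∀ K : Set (EuclideanSpace ℝ (Fin n)), IsCompact K → K ⊆ Ω →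
      TendstoUniformlyOn u ulim Filter.atTop K)
    (hulimC2 : ContDiffOn ℝ 2 ulim Ω)
    (hulimharm : ∀ x ∈ Ω, laplacian ulim x = 0)
    (hW1p : ∃ C' : ℝ, 0 ≤ C' ∧ ∀ k : ℕ,
      eLpNorm (u k) (ENNReal.ofReal p) (volume.restrict Ω) +
        eLpNorm (fun x => fderiv ℝ (u k) x) (ENNReal.ofReal p) (volume.restrict Ω)
      ≤ ENNReal.ofReal C') :
    ∃ v : EuclideanSpace ℝ (Fin n) → ℝ,
      (∀ x ∈ Ω, v x = ulim x) ∧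
      ContinuousOn v (closure Ω) ∧
      (∀ x ∈ frontier Ω, v x = glim x) ∧
      TendstoUniformlyOn u v Filter.atTop (closure Ω) ∧
      (∀ x ∈ Ω, laplacian v x = 0) :=
  uniform_convergence_dirichlet_limit_general hn Ω hΩopen hΩbdd g u glim ulim huC2 huC0 huharm
    hubdry hgconv hulocunif hulimharm
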